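/- Let W be a Hilbert space with orthogonal Hodge decomposition W = B ⊕ H ⊕ B*, Z = B ⊕ H. Let H_h ⊂ Z be a finite-dimensional subspace with dim H_h = dim H = M < ∞ and suppose δ(H_h, H) ≤ μ where δ(H_h,H) = sup_{q ∈ H_h, ‖q‖=1} ‖q - P_H q‖. Then for any u_h ⊥ H_h with discrete decomposition u_h = ũ_h + u_h^⊥ where ũ_h ∈ B and u_h^⊥ ⊥ H_h, and any q ∈ H with ‖q‖=1: ⟨u_h, q⟩ ≤ μ · (‖P_B u_h^⊥‖ + ‖P_H u_h‖). -/

import Mathlib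

open scoped InnerProductSpace

/-- `δ(A,B) = sup_{x ∈ A, ‖x‖=1} ‖x - P_B x‖`. -/
noncomputable def subspaceDelta {W : Type*} [NormedAddCommGroup W] [InnerProductSpace ℝ W]
    (A B : Submodule ℝ W) [B.HasOrthogonalProjection] : ℝ :=
  sSup {r : ℝ | ∃ x ∈ A, ‖x‖ = 1 ∧ r = ‖x - (B.orthogonalProjectionOnto x : W)‖}

/-! If `P_H` moves each `x ∈ H_h` by at most `μ‖x‖` with `μ < 1`, it is injective on `H_h`, hence
onto `H` by the dimension count. Writing `q = P_H a` with `a ∈ H_h`, so `a = q + r` with `r ⊥ q`, the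
distance from `q` to the line `ℝ a` is `‖q‖‖r‖/‖a‖ ≤ μ‖q‖`; thus `δ(H, H_h) ≤ δ(H_h, H)`.

Since `ũ_h ∈ B ⊥ q` and `u_h^⊥ ⊥ H_h`, `⟪u_h, q⟫ = ⟪u_h^⊥, q - P_{H_h} q⟫`. The vector
`q - P_{H_h} q` lies in `B ⊕ H`, so `u_h^⊥` may be replaced by `P_B u_h^⊥ + P_H u_h^⊥`, and
`P_H u_h^⊥ = P_H u_h`; Cauchy–Schwarz finishes. -/

section

variable {E : Type*} [NormedAddCommGroup E] [InnerProductSpace ℝ E]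

lemma exists_norm_sub_smul_add_le {q r : E} (hqr : ⟪q, r⟫_ℝ = 0) {μ : ℝ} (hμ : 0 ≤ μ)
    (h : ‖r‖ ≤ μ * ‖q + r‖) :
    ∃ t : ℝ, ‖q - t • (q + r)‖ ≤ μ * ‖q‖ := by
  have hpyth : ‖q + r‖ ^ 2 = ‖q‖ ^ 2 + ‖r‖ ^ 2 := by
    rw [norm_add_sq_real, hqr]; ring
  rcases eq_or_ne (q + r) 0 with ha | ha
  · have hq : q = 0 := by
      rw [ha, norm_zero] at hpyth
      exact norm_eq_zero.mp (by nlinarith [norm_nonneg q, norm_nonneg r])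
    exact ⟨0, by simp [hq]⟩
  refine ⟨‖q‖ ^ 2 / ‖q + r‖ ^ 2, ?_⟩
  have hpos : 0 < ‖q + r‖ ^ 2 := by positivity
  have hinner : ⟪q, q + r⟫_ℝ = ‖q‖ ^ 2 := by
    rw [inner_add_right, hqr, real_inner_self_eq_norm_sq, add_zero]
  have hsq : ‖q - (‖q‖ ^ 2 / ‖q + r‖ ^ 2) • (q + r)‖ ^ 2 =
      ‖q‖ ^ 2 * ‖r‖ ^ 2 / ‖q + r‖ ^ 2 := by
    rw [norm_sub_sq_real, inner_smul_right, hinner, norm_smul, mul_pow, Real.norm_eq_abs, sq_abs]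
    field_simp
    rw [hpyth]; ring
  have hr : ‖r‖ ^ 2 ≤ μ ^ 2 * ‖q + r‖ ^ 2 := by
    rw [← mul_pow]; exact pow_le_pow_left₀ (norm_nonneg r) h 2
  refine (pow_le_pow_iff_left₀ (norm_nonneg _) (by positivity) two_ne_zero).mp ?_
  rw [hsq, mul_pow, div_le_iff₀ hpos]
  nlinarith [sq_nonneg ‖q‖]

end

namespace Submodule

variable {E : Type*} [NormedAddCommGroup E] [InnerProductSpace ℝ E]

lemma norm_sub_starProjection_le (K : Submodule ℝ E) [K.HasOrthogonalProjection] (x : E) :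
    ‖x - K.starProjection x‖ ≤ ‖x‖ := by
  rw [← starProjection_orthogonal_val]
  exact Kᗮ.norm_starProjection_apply_le x

lemma norm_sub_starProjection_le_of_finrank_eq {K L : Submodule ℝ E}
    [FiniteDimensional ℝ K] [FiniteDimensional ℝ L]
    (hdim : Module.finrank ℝ K = Module.finrank ℝ L) {μ : ℝ} (hμ : 0 ≤ μ)
    (hK : ∀ x ∈ K, ‖x - L.starProjection x‖ ≤ μ * ‖x‖) {q : E} (hq : q ∈ L) :
    ‖q - K.starProjection q‖ ≤ μ * ‖q‖ := by
  rcases le_or_gt 1 μ with h1 | h1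
  · exact (K.norm_sub_starProjection_le q).trans (le_mul_of_one_le_left (norm_nonneg q) h1)
  set T : K →ₗ[ℝ] L := L.orthogonalProjectionOnto.toLinearMap ∘ₗ K.subtype
  have hT : Function.Injective T := by
    refine (injective_iff_map_eq_zero T).mpr fun a ha => ?_
    have hPa : L.starProjection (a : E) = 0 := congrArg Subtype.val ha
    have := hK a a.2
    rw [hPa, sub_zero] at this
    exact norm_le_zero_iff.mp (by rw [coe_norm]; nlinarith [norm_nonneg (a : E)])
  obtain ⟨a, ha⟩ := (LinearMap.injective_iff_surjective_of_finrank_eq_finrank hdim).mp hT ⟨q, hq⟩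
  have hPa : L.starProjection a = q := congrArg Subtype.val ha
  have horth : ⟪q, (a : E) - q⟫_ℝ = 0 := by
    rw [real_inner_comm, ← hPa]
    exact L.starProjection_inner_eq_zero _ _ (hPa ▸ hq)
  obtain ⟨t, ht⟩ := exists_norm_sub_smul_add_le horth hμ
    (by rw [add_sub_cancel, ← hPa]; exact hK a a.2)
  rw [add_sub_cancel] at ht
  calc ‖q - K.starProjection q‖ ≤ ‖q - t • (a : E)‖ := by
        rw [K.starProjection_minimal q]
        exact ciInf_le ⟨0, by rintro _ ⟨y, rfl⟩; positivity⟩ (t • a)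
    _ ≤ μ * ‖q‖ := ht

lemma inner_eq_inner_starProjection_add_of_mem_sup {B H : Submodule ℝ E}
    [B.HasOrthogonalProjection] [H.HasOrthogonalProjection] (hBH : B ⟂ H) (v : E) {z : E}
    (hz : z ∈ B ⊔ H) : ⟪v, z⟫_ℝ = ⟪B.starProjection v + H.starProjection v, z⟫_ℝ := by
  obtain ⟨b, hb, h, hh, rfl⟩ := mem_sup.mp hz
  have hvb := B.starProjection_inner_eq_zero v b hb
  have hvh := H.starProjection_inner_eq_zero v h hh
  have hBh : ⟪B.starProjection v, h⟫_ℝ = 0 := hBH.inner_eq (B.starProjection_apply_mem v) hh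
  have hHb : ⟪H.starProjection v, b⟫_ℝ = 0 := hBH.symm.inner_eq (H.starProjection_apply_mem v) hb
  simp only [inner_add_left, inner_add_right, inner_sub_left] at hvb hvh ⊢
  linarith

end Submodule

open Submodule

section

variable {E : Type*} [NormedAddCommGroup E] [InnerProductSpace ℝ E]

lemma subspaceDelta_nonneg (A B : Submodule ℝ E) [B.HasOrthogonalProjection] :
    0 ≤ subspaceDelta A B :=
  Real.sSup_nonneg (by rintro _ ⟨x, -, -, rfl⟩; positivity)

lemma norm_sub_starProjection_le_subspaceDelta_mul {A B : Submodule ℝ E}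
    [B.HasOrthogonalProjection] {x : E} (hx : x ∈ A) :
    ‖x - B.starProjection x‖ ≤ subspaceDelta A B * ‖x‖ := by
  rcases eq_or_ne x 0 with rfl | hx0
  · simp
  have hunit : ‖‖x‖⁻¹ • x - B.starProjection (‖x‖⁻¹ • x)‖ ≤ subspaceDelta A B :=
    le_csSup ⟨1, by rintro _ ⟨y, -, hy, rfl⟩; exact hy ▸ B.norm_sub_starProjection_le y⟩
      ⟨‖x‖⁻¹ • x, A.smul_mem _ hx, norm_smul_inv_norm hx0, rfl⟩
  rwa [map_smul, ← smul_sub, norm_smul, norm_inv, norm_norm,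
    inv_mul_le_iff₀ (norm_pos_iff.mpr hx0), mul_comm] at hunit

lemma norm_sub_starProjection_le_subspaceDelta_mul_of_finrank_eq {K L : Submodule ℝ E}
    [FiniteDimensional ℝ K] [FiniteDimensional ℝ L]
    (hdim : Module.finrank ℝ K = Module.finrank ℝ L) {q : E} (hq : q ∈ L) :
    ‖q - K.starProjection q‖ ≤ subspaceDelta K L * ‖q‖ :=
  norm_sub_starProjection_le_of_finrank_eq hdim (subspaceDelta_nonneg K L)
    (fun _ hx => norm_sub_starProjection_le_subspaceDelta_mul hx) hq

end

theorem harmonic_inner_bound_general {W : Type*} [NormedAddCommGroup W]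
    [InnerProductSpace ℝ W] (B H : Submodule ℝ W)
    [CompleteSpace B]
    (hBH : ∀ b ∈ B, ∀ h ∈ H, ⟪b, h⟫_ℝ = 0)
    (Z : Submodule ℝ W) (hZ : Z = B ⊔ H)
    (Hh : Submodule ℝ W) (hHhZ : Hh ≤ Z)
    [FiniteDimensional ℝ Hh] [FiniteDimensional ℝ H]
    (hdim : Module.finrank ℝ Hh = Module.finrank ℝ H)
    (μ : ℝ) (hμ : subspaceDelta Hh H ≤ μ)
    (uh ut up : W)
    (hut : ut ∈ B) (hup : ∀ v ∈ Hh, ⟪up, v⟫_ℝ = 0) (hsum : uh = ut + up)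
    (q : W) (hq : q ∈ H) (hqn : ‖q‖ = 1) :
    ⟪uh, q⟫_ℝ ≤
      μ * (‖(B.orthogonalProjectionOnto up : W)‖ + ‖(H.orthogonalProjectionOnto uh : W)‖) := by
  have hBH' : B ⟂ H := isOrtho_iff_inner_eq.mpr hBH
  set p := Hh.starProjection q
  have hgap : ‖q - p‖ ≤ μ := by
    simpa [hqn] using (norm_sub_starProjection_le_subspaceDelta_mul_of_finrank_eq hdim hq).trans
      (mul_le_mul_of_nonneg_right hμ (norm_nonneg q))
  have hmem : q - p ∈ B ⊔ H :=
    sub_mem (mem_sup_right hq) (hZ ▸ hHhZ (Hh.starProjection_apply_mem q))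
  have hPH : H.starProjection up = H.starProjection uh := by
    rw [hsum, map_add, H.starProjection_apply_eq_zero_iff.mpr (hBH'.le hut), zero_add]
  calc ⟪uh, q⟫_ℝ = ⟪up, q - p⟫_ℝ := by
        rw [hsum, inner_add_left, hBH ut hut q hq, zero_add, inner_sub_right,
          hup p (Hh.starProjection_apply_mem q), sub_zero]
    _ = ⟪B.starProjection up + H.starProjection uh, q - p⟫_ℝ := by
        rw [← hPH]; exact inner_eq_inner_starProjection_add_of_mem_sup hBH' up hmem
    _ ≤ ‖B.starProjection up + H.starProjection uh‖ * ‖q - p‖ := real_inner_le_norm _ _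
    _ ≤ (‖B.starProjection up‖ + ‖H.starProjection uh‖) * μ :=
        mul_le_mul (norm_add_le _ _) hgap (norm_nonneg _) (by positivity)
    _ = _ := mul_comm _ _

/-- Sharper bound for the harmonic component: with `W = B ⊕ H ⊕ B*`, `Z = B ⊔ H`,
`H_h ≤ Z` of the same finite dimension as `H` with `δ(H_h,H) ≤ μ`, if `u_h ⊥ H_h` and
`u_h = ũ_h + u_h^⊥` with `ũ_h ∈ B`, `u_h^⊥ ⊥ H_h`, then for every unit `q ∈ H`,
`⟪u_h, q⟫ ≤ μ (‖P_B u_h^⊥‖ + ‖P_H u_h‖)`. -/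
theorem harmonic_inner_bound {W : Type*} [NormedAddCommGroup W]
    [InnerProductSpace ℝ W] [CompleteSpace W] (B H Bs : Submodule ℝ W)
    [CompleteSpace B] [CompleteSpace H]
    (hBH : ∀ b ∈ B, ∀ h ∈ H, ⟪b, h⟫_ℝ = 0)
    (hBBs : ∀ b ∈ B, ∀ s ∈ Bs, ⟪b, s⟫_ℝ = 0)
    (hHBs : ∀ h ∈ H, ∀ s ∈ Bs, ⟪h, s⟫_ℝ = 0)
    (hsup : B ⊔ H ⊔ Bs = ⊤)
    (Z : Submodule ℝ W) [CompleteSpace Z] (hZ : Z = B ⊔ H)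
    (Hh : Submodule ℝ W) [CompleteSpace Hh] (hHhZ : Hh ≤ Z)
    [FiniteDimensional ℝ Hh] [FiniteDimensional ℝ H]
    (hdim : Module.finrank ℝ Hh = Module.finrank ℝ H)
    (μ : ℝ) (hμ : subspaceDelta Hh H ≤ μ)
    (uh ut up : W) (huh : ∀ v ∈ Hh, ⟪uh, v⟫_ℝ = 0)
    (hut : ut ∈ B) (hup : ∀ v ∈ Hh, ⟪up, v⟫_ℝ = 0) (hsum : uh = ut + up)
    (q : W) (hq : q ∈ H) (hqn : ‖q‖ = 1) :
    ⟪uh, q⟫_ℝ ≤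
      μ * (‖(B.orthogonalProjectionOnto up : W)‖ + ‖(H.orthogonalProjectionOnto uh : W)‖) :=
  harmonic_inner_bound_general B H hBH Z hZ Hh hHhZ hdim μ hμ uh ut up hut hup hsum q hq hqn
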